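/- arXiv:2202.09872 — 2 statements merged into one kernel-verified Lean document; each statement's English description precedes it below -/
import Mathlib

section
/- In the setting of the previous statement, with r = sup_{v∈X₀} (f(v) − a(û,v))/‖v‖_a the local dual residual, any Galerkin solution û₊ in an enlarged subspace Z₊ ⊇ Z + span{u_loc} satisfies ‖u − û₊‖²_a ≤ ‖u − û‖²_a − r². -/
/-!
Since `u_loc ∈ X₀` solves the local problem, the local residual `v ↦ f v - a(û, v)` on `X₀` is
`a(u_loc, ·)`, so by Cauchy–Schwarz its dual norm `r` is the energy norm of `u_loc`, attained at
`v = u_loc`. As `û + u_loc ∈ Z₊`, Galerkin optimality gives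
`‖u - û₊‖²_a ≤ ‖u - û - u_loc‖²_a`, and since `a(u - û, u_loc) = a(u_loc, u_loc)` the right-hand
side expands to `‖u - û‖²_a - r²`.
-/

namespace LinearMap.BilinForm

variable {E : Type*} [AddCommGroup E] [Module ℝ E] (B : LinearMap.BilinForm ℝ E)

def ofIsLinearMap (a : E → E → ℝ) (h₁ : ∀ v, IsLinearMap ℝ (fun w => a w v))
    (h₂ : ∀ w, IsLinearMap ℝ (a w)) : LinearMap.BilinForm ℝ E :=
  LinearMap.mk₂ ℝ a (fun w w' v => (h₁ v).map_add w w') (fun c w v => (h₁ v).map_smul c w)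
    (fun w => (h₂ w).map_add) (fun c w v => (h₂ w).map_smul c v)

lemma apply_le_sqrt_mul_sqrt (hs : ∀ x, 0 ≤ B x x) (hB : B.IsSymm) (x y : E) :
    B x y ≤ √(B x x) * √(B y y) := by
  rw [← Real.sqrt_mul (hs x)]
  exact (le_abs_self _).trans (Real.abs_le_sqrt (B.apply_sq_le_of_symm hs (isSymm_iff.1 hB) x y))

lemma iSup_apply_div_sqrt_eq_sqrt (hs : ∀ x, 0 ≤ B x x) (hB : B.IsSymm) {V : Submodule ℝ E}
    {w : E} (hw : w ∈ V) : ⨆ v : V, B w v / √(B v v) = √(B w w) := by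
  have hbound (v : V) : B w v / √(B v v) ≤ √(B w w) :=
    div_le_of_le_mul₀ (Real.sqrt_nonneg _) (Real.sqrt_nonneg _)
      (B.apply_le_sqrt_mul_sqrt hs hB w v)
  refine le_antisymm (ciSup_le hbound) ?_
  exact le_ciSup_of_le ⟨_, Set.forall_mem_range.2 hbound⟩ ⟨w, hw⟩ Real.div_sqrt.ge

lemma apply_sub_sub_self_eq (hB : B.IsSymm) {e d : E} (h : B e d = B d d) :
    B (e - d) (e - d) = B e e - B d d := by
  have hde : B d e = B d d := (hB.eq d e).trans h
  simp only [map_sub, LinearMap.sub_apply, h, hde]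
  ring

lemma apply_sub_self_le_of_orthogonal (hs : ∀ x, 0 ≤ B x x) (hB : B.IsSymm) {W : Submodule ℝ E}
    {u p q : E} (hp : p ∈ W) (hq : q ∈ W) (horth : ∀ w ∈ W, B (u - p) w = 0) :
    B (u - p) (u - p) ≤ B (u - q) (u - q) := by
  have hd : B (u - p) (p - q) = 0 := horth _ (W.sub_mem hp hq)
  have hd' : B (p - q) (u - p) = 0 := (hB.eq _ _).trans hd
  have hsplit : u - q = (u - p) + (p - q) := by abel
  simp only [hsplit, map_add, LinearMap.add_apply, hd, hd']
  linarith [hs (p - q)]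

end LinearMap.BilinForm

theorem enrichment_one_step_reduction_general
    {X : Type*} [NormedAddCommGroup X] [InnerProductSpace ℝ X]
    (a : X → X → ℝ)
    (hbilin₁ : ∀ v, IsLinearMap ℝ (fun w => a w v))
    (hbilin₂ : ∀ w, IsLinearMap ℝ (a w))
    (hsymm : ∀ w v, a w v = a v w)
    (c₀ : ℝ) (hc₀ : 0 < c₀) (hcoer : ∀ w, c₀ * ‖w‖ ^ 2 ≤ a w w)
    (f : X →L[ℝ] ℝ)
    (u : X) (hu : ∀ v, a u v = f v)
    (Z : Submodule ℝ X)
    (uh : X) (huhZ : uh ∈ Z)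
    (X₀ : Submodule ℝ X)
    (uloc : X) (hulocmem : uloc ∈ X₀)
    (huloc : ∀ v ∈ X₀, a (uh + uloc) v = f v)
    (r : ℝ)
    (hr : r = ⨆ v : X₀, (f (v : X) - a uh (v : X)) / Real.sqrt (a (v : X) (v : X)))
    (Zp : Submodule ℝ X)
    (hZZp : Z ⊔ Submodule.span ℝ {uloc} ≤ Zp)
    (uhp : X) (huhpZ : uhp ∈ Zp) (hgalp : ∀ v ∈ Zp, a uhp v = f v) :
    a (u - uhp) (u - uhp) ≤ a (u - uh) (u - uh) - r ^ 2 := by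
  set B := LinearMap.BilinForm.ofIsLinearMap a hbilin₁ hbilin₂
  have hB : B.IsSymm := ⟨hsymm⟩
  have hs (w : X) : 0 ≤ B w w := by
    have : 0 ≤ c₀ * ‖w‖ ^ 2 := by positivity
    exact this.trans (hcoer w)
  have hres (v : X) (hv : v ∈ X₀) : f v - B uh v = B uloc v := by
    have : B uh v + B uloc v = f v := by rw [← LinearMap.add_apply, ← map_add]; exact huloc v hv
    linarith
  have hr' : r = √(B uloc uloc) := by
    rw [hr, ← B.iSup_apply_div_sqrt_eq_sqrt hs hB hulocmem]
    exact iSup_congr fun v => by rw [← hres v v.2]; rfl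
  have hloc : B (u - uh) uloc = B uloc uloc := by
    rw [map_sub, LinearMap.sub_apply, ← hres uloc hulocmem]
    exact congrArg (· - _) (hu uloc)
  have hwZp : uh + uloc ∈ Zp :=
    Zp.add_mem (hZZp (Submodule.mem_sup_left huhZ))
      (hZZp (Submodule.mem_sup_right (Submodule.mem_span_singleton_self uloc)))
  have horth (w : X) (hw : w ∈ Zp) : B (u - uhp) w = 0 := by
    rw [map_sub, LinearMap.sub_apply, sub_eq_zero]
    exact (hu w).trans (hgalp w hw).symm
  calc B (u - uhp) (u - uhp) ≤ B (u - (uh + uloc)) (u - (uh + uloc)) :=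
        B.apply_sub_self_le_of_orthogonal hs hB huhpZ hwZp horth
    _ = B (u - uh) (u - uh) - B uloc uloc := by
        rw [← sub_sub]; exact B.apply_sub_sub_self_eq hB hloc
    _ = a (u - uh) (u - uh) - r ^ 2 := by rw [hr', Real.sq_sqrt (hs _)]; rfl

/-- One-step error reduction of the enrichment step: enlarging the Galerkin space by the
local correction decreases the squared energy error by the squared local dual residual. -/
theorem enrichment_one_step_reduction
    {X : Type*} [NormedAddCommGroup X] [InnerProductSpace ℝ X] [CompleteSpace X]
    (a : X → X → ℝ)
    (hbilin₁ : ∀ v, IsLinearMap ℝ (fun w => a w v))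
    (hbilin₂ : ∀ w, IsLinearMap ℝ (a w))
    (hsymm : ∀ w v, a w v = a v w)
    (c₀ : ℝ) (hc₀ : 0 < c₀) (hcoer : ∀ w, c₀ * ‖w‖ ^ 2 ≤ a w w)
    (Ca : ℝ) (hcont : ∀ w v, |a w v| ≤ Ca * ‖w‖ * ‖v‖)
    (f : X →L[ℝ] ℝ)
    (u : X) (hu : ∀ v, a u v = f v)
    (Z : Submodule ℝ X) (hZ : IsClosed (Z : Set X))
    (uh : X) (huhZ : uh ∈ Z) (hgal : ∀ v ∈ Z, a uh v = f v)
    (X₀ : Submodule ℝ X) (hX₀ : IsClosed (X₀ : Set X))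
    (uloc : X) (hulocmem : uloc ∈ X₀)
    (huloc : ∀ v ∈ X₀, a (uh + uloc) v = f v)
    (r : ℝ)
    (hr : r = ⨆ v : X₀, (f (v : X) - a uh (v : X)) / Real.sqrt (a (v : X) (v : X)))
    (Zp : Submodule ℝ X) (hZp : IsClosed (Zp : Set X))
    (hZZp : Z ⊔ Submodule.span ℝ {uloc} ≤ Zp)
    (uhp : X) (huhpZ : uhp ∈ Zp) (hgalp : ∀ v ∈ Zp, a uhp v = f v) :
    a (u - uhp) (u - uhp) ≤ a (u - uh) (u - uh) - r ^ 2 :=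
  enrichment_one_step_reduction_general a hbilin₁ hbilin₂ hsymm c₀ hc₀ hcoer f u hu Z uh huhZ X₀
    uloc hulocmem huloc r hr Zp hZZp uhp huhpZ hgalp
end

section
/- Let X be a finite-dimensional normed space equipped with two norms |·|_{1} and |·|_{1,p}, β > 0, L > 0, c_h = sup_{v∈X, v≠0} |v|_{1,p}/|v|_{1}, and let G : X → X' be continuously differentiable with inf-sup constant β for G'(û) (with respect to |·|₁), and Lipschitz derivative ‖G'(û) − G'(w)‖ ≤ L |û − w|_{1,p} for w in a ball B(û, R). Set τ = (2 L c_h / β²) ‖G(û)‖_{X'}. If τ < 1 and R ≥ β/(L c_h), then there exists a unique u ∈ B(û, β/(L c_h)) with G(u) = 0, and |û − u|₁ ≤ (β/(L c_h)) (1 − √(1 − τ)). -/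
/-!
With `A = G'(û)` and `K = L c_h`, the Lipschitz bound on `G'` gives the Taylor remainder estimate
`‖G v - G w - A (v - w)‖ ≤ K/2 (|v - û|₁ + |w - û|₁) |v - w|₁` on the ball of radius `β / K`.
The inf-sup condition makes `A` invertible with `‖A⁻¹‖ ≤ 1/β`, so the simplified Newton map
`v ↦ v - A⁻¹ G v` maps the ball of radius `r` into itself as soon as `K/2 r² + ‖G û‖ ≤ β r`, and is
a contraction there with constant `K r / β`. The smaller root `r = (β / K)(1 - √(1 - τ))` of this
quadratic satisfies `K r < β`, so Banach's fixed point theorem gives the zero, and the same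
remainder estimate, with `K (r + β / K) < 2 β`, shows that it is the only zero in the ball of
radius `β / K`.
-/

open Metric Set

theorem le_mul_norm_of_eq_iSup_div_norm {E : Type*} [NormedAddCommGroup E] {p : E → ℝ} {c : ℝ}
    (hc : 0 < c) (hcdef : c = ⨆ v : {v : E // v ≠ 0}, p v / ‖(v : E)‖) {x : E} (hx : x ≠ 0) :
    p x ≤ c * ‖x‖ := by
  have hbdd : BddAbove (range fun v : {v : E // v ≠ 0} => p v / ‖(v : E)‖) := by
    by_contra h
    rw [Real.iSup_of_not_bddAbove h] at hcdef
    exact hc.ne' hcdef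
  have hle : p x / ‖x‖ ≤ c := hcdef ▸ le_ciSup hbdd ⟨x, hx⟩
  rwa [div_le_iff₀ (norm_pos_iff.mpr hx)] at hle

theorem norm_sub_le_of_norm_sub_le_mul_of_eq_iSup {E F : Type*} [NormedAddCommGroup E]
    [NormedAddCommGroup F] {f : E → F} {p : E → ℝ} {c L : ℝ} (hc : 0 < c)
    (hcdef : c = ⨆ v : {v : E // v ≠ 0}, p v / ‖(v : E)‖) (hL : 0 ≤ L) {x₀ z : E}
    (hf : ‖f x₀ - f z‖ ≤ L * p (x₀ - z)) : ‖f z - f x₀‖ ≤ L * c * ‖z - x₀‖ := by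
  rcases eq_or_ne z x₀ with rfl | hne
  · simp
  rw [norm_sub_rev, norm_sub_rev z, mul_assoc]
  refine hf.trans ?_
  gcongr
  exact le_mul_norm_of_eq_iSup_div_norm hc hcdef (sub_ne_zero.mpr hne.symm)

theorem ContinuousLinearMap.exists_continuousLinearEquiv_toStrongDual_of_injective
    {𝕜 E : Type*} [NontriviallyNormedField 𝕜] [CompleteSpace 𝕜] [NormedAddCommGroup E]
    [NormedSpace 𝕜 E] [FiniteDimensional 𝕜 E] {A : E →L[𝕜] StrongDual 𝕜 E}
    (hA : Function.Injective A) : ∃ e : E ≃L[𝕜] StrongDual 𝕜 E, ⇑e = A := by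
  have hdim : Module.finrank 𝕜 E = Module.finrank 𝕜 (StrongDual 𝕜 E) := by
    rw [← LinearMap.toContinuousLinearMap.finrank_eq, Module.finrank_linearMap_self]
  exact ⟨(LinearMap.linearEquivOfInjective (A : E →ₗ[𝕜] StrongDual 𝕜 E) hA
    hdim).toContinuousLinearEquiv, rfl⟩

section Remainder

variable {E F : Type*} [NormedAddCommGroup E] [NormedSpace ℝ E] [NormedAddCommGroup F]
  [NormedSpace ℝ F]

theorem norm_image_sub_sub_le_of_norm_fderiv_sub_le {f : E → F} {f' : E → E →L[ℝ] F}
    {A : E →L[ℝ] F} {x₀ : E} {K R : ℝ} (hK : 0 ≤ K)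
    (hf : ∀ z ∈ closedBall x₀ R, HasFDerivAt f (f' z) z)
    (hf' : ∀ z ∈ closedBall x₀ R, ‖f' z - A‖ ≤ K * ‖z - x₀‖)
    {v w : E} (hv : v ∈ closedBall x₀ R) (hw : w ∈ closedBall x₀ R) :
    ‖f v - f w - A (v - w)‖ ≤ K / 2 * (‖v - x₀‖ + ‖w - x₀‖) * ‖v - w‖ := by
  set d := v - w
  set a := ‖w - x₀‖
  set b := ‖v - x₀‖
  have hseg : ∀ t ∈ Icc (0 : ℝ) 1, w + t • d ∈ closedBall x₀ R := fun t ht =>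
    (convex_closedBall x₀ R).add_smul_sub_mem hw hv ht
  have hpath : ∀ t ∈ Icc (0 : ℝ) 1, HasDerivAt (fun t : ℝ => f (w + t • d) - f w - t • A d)
      (f' (w + t • d) d - A d) t := by
    intro t ht
    have hline : HasDerivAt (fun t : ℝ => w + t • d) d t := by
      simpa using ((hasDerivAt_id t).smul_const d).const_add w
    have := (((hf _ (hseg t ht)).comp_hasDerivAt t hline).sub_const (f w)).sub
      ((hasDerivAt_id t).smul_const (A d))
    rwa [one_smul] at this
  have hbound : ∀ t ∈ Ico (0 : ℝ) 1, ‖f' (w + t • d) d - A d‖ ≤ K * ‖d‖ * (a + (b - a) * t) := by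
    intro t ht
    have ht' : t ∈ Icc (0 : ℝ) 1 := Ico_subset_Icc_self ht
    have hdist : ‖w + t • d - x₀‖ ≤ (1 - t) * a + t * b := by
      have : w + t • d - x₀ = (1 - t) • (w - x₀) + t • (v - x₀) := by module
      rw [this]
      refine (norm_add_le _ _).trans_eq ?_
      rw [norm_smul, norm_smul, Real.norm_of_nonneg (by linarith [ht'.2]),
        Real.norm_of_nonneg ht'.1]
    calc ‖f' (w + t • d) d - A d‖ = ‖(f' (w + t • d) - A) d‖ := rfl
      _ ≤ ‖f' (w + t • d) - A‖ * ‖d‖ := (f' (w + t • d) - A).le_opNorm d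
      _ ≤ K * ((1 - t) * a + t * b) * ‖d‖ := by
          gcongr
          exact (hf' _ (hseg t ht')).trans (by gcongr)
      _ = K * ‖d‖ * (a + (b - a) * t) := by ring
  -- A primitive of the bound in `hbound`; its value at `t = 1` is the claimed estimate.
  have hB : ∀ t, HasDerivAt (fun t : ℝ => K * ‖d‖ * (a * t + (b - a) / 2 * t ^ 2))
      (K * ‖d‖ * (a + (b - a) * t)) t := by
    intro t
    exact ((((hasDerivAt_id' t).const_mul a).add ((hasDerivAt_pow 2 t).const_mul
      ((b - a) / 2))).const_mul (K * ‖d‖)).congr_deriv (by push_cast; ring)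
  have := image_norm_le_of_norm_deriv_right_le_deriv_boundary
    (fun t ht => (hpath t ht).continuousAt.continuousWithinAt)
    (fun t ht => (hpath t (Ico_subset_Icc_self ht)).hasDerivWithinAt) (by simp) hB hbound
    (right_mem_Icc.mpr zero_le_one)
  convert this using 1
  · simp [d]
  · ring

end Remainder

section Newton

variable {E F : Type*} [NormedAddCommGroup E] [NormedSpace ℝ E] [NormedAddCommGroup F]
  [NormedSpace ℝ F] {f : E → F} {x₀ : E} {β K R : ℝ}

theorem eq_of_image_eq_of_norm_remainder_le {A : E →L[ℝ] F} (hA : ∀ x, β * ‖x‖ ≤ ‖A x‖)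
    (hrem : ∀ v ∈ closedBall x₀ R, ∀ w ∈ closedBall x₀ R,
      ‖f v - f w - A (v - w)‖ ≤ K / 2 * (‖v - x₀‖ + ‖w - x₀‖) * ‖v - w‖)
    {u u' : E} (hu : u ∈ closedBall x₀ R) (hu' : u' ∈ closedBall x₀ R)
    (hclose : K * (‖u - x₀‖ + ‖u' - x₀‖) < 2 * β) (heq : f u = f u') : u = u' := by
  by_contra hne
  have hpos : 0 < ‖u - u'‖ := norm_pos_iff.mpr (sub_ne_zero.mpr hne)
  have := calc β * ‖u - u'‖ ≤ ‖A (u - u')‖ := hA _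
    _ = ‖f u - f u' - A (u - u')‖ := by rw [heq, sub_self, zero_sub, norm_neg]
    _ ≤ K / 2 * (‖u - x₀‖ + ‖u' - x₀‖) * ‖u - u'‖ := hrem u hu u' hu'
  nlinarith

theorem mul_norm_newton_sub_le {A : E ≃L[ℝ] F} (hA : ∀ x, β * ‖x‖ ≤ ‖A x‖) (v w : E) :
    β * ‖(v - A.symm (f v)) - (w - A.symm (f w))‖ ≤ ‖f v - f w - A (v - w)‖ := by
  have hsub : (v - A.symm (f v)) - (w - A.symm (f w)) = -A.symm (f v - f w - A (v - w)) := by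
    simp only [map_sub, ContinuousLinearEquiv.symm_apply_apply]
    abel
  have := hA (A.symm (f v - f w - A (v - w)))
  rwa [ContinuousLinearEquiv.apply_symm_apply, ← norm_neg, ← hsub] at this

variable [CompleteSpace E]

theorem exists_zero_of_norm_remainder_le {A : E ≃L[ℝ] F} (hA : ∀ x, β * ‖x‖ ≤ ‖A x‖)
    (hβ : 0 < β) (hK : 0 ≤ K) {r : ℝ}
    (hrem : ∀ v ∈ closedBall x₀ r, ∀ w ∈ closedBall x₀ r,
      ‖f v - f w - A (v - w)‖ ≤ K / 2 * (‖v - x₀‖ + ‖w - x₀‖) * ‖v - w‖)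
    (hKr : K * r < β) (hroot : K / 2 * r ^ 2 + ‖f x₀‖ ≤ β * r) :
    ∃ u ∈ closedBall x₀ r, f u = 0 := by
  set Φ : E → E := fun v => v - A.symm (f v)
  have hr : 0 ≤ r := by nlinarith [norm_nonneg (f x₀)]
  have hx₀ : x₀ ∈ closedBall x₀ r := mem_closedBall_self hr
  have hstep : β * ‖Φ x₀ - x₀‖ ≤ ‖f x₀‖ := by
    simpa [Φ] using hA (A.symm (f x₀))
  have hmaps : MapsTo Φ (closedBall x₀ r) (closedBall x₀ r) := by
    intro v hv
    have hv' : ‖v - x₀‖ ≤ r := mem_closedBall_iff_norm.mp hv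
    rw [mem_closedBall_iff_norm, ← mul_le_mul_iff_of_pos_left hβ]
    calc β * ‖Φ v - x₀‖ ≤ β * ‖Φ v - Φ x₀‖ + β * ‖Φ x₀ - x₀‖ := by
          rw [← mul_add]; gcongr; exact norm_sub_le_norm_sub_add_norm_sub _ _ _
      _ ≤ K / 2 * (‖v - x₀‖ + ‖x₀ - x₀‖) * ‖v - x₀‖ + ‖f x₀‖ :=
          add_le_add ((mul_norm_newton_sub_le hA v x₀).trans (hrem v hv x₀ hx₀)) hstep
      _ ≤ K / 2 * r ^ 2 + ‖f x₀‖ := by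
          rw [sub_self, norm_zero, add_zero, mul_assoc, ← sq]; gcongr
      _ ≤ β * r := hroot
  have hlip : LipschitzOnWith (Real.toNNReal (K * r / β)) Φ (closedBall x₀ r) := by
    refine LipschitzOnWith.of_dist_le' fun v hv w hw => ?_
    rw [dist_eq_norm, dist_eq_norm, div_mul_eq_mul_div, le_div_iff₀ hβ, mul_comm]
    refine (mul_norm_newton_sub_le hA v w).trans ((hrem v hv w hw).trans ?_)
    rw [mem_closedBall, dist_eq_norm] at hv hw
    have : ‖v - x₀‖ + ‖w - x₀‖ ≤ 2 * r := by linarith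
    calc K / 2 * (‖v - x₀‖ + ‖w - x₀‖) * ‖v - w‖ ≤ K / 2 * (2 * r) * ‖v - w‖ := by gcongr
      _ = K * r * ‖v - w‖ := by ring
  have hcontr : ContractingWith (Real.toNNReal (K * r / β)) (hmaps.restrict Φ _ _) :=
    ⟨Real.toNNReal_lt_one.mpr ((div_lt_one hβ).mpr hKr), hlip.mapsToRestrict hmaps⟩
  obtain ⟨u, hu, hfix, -⟩ := hcontr.exists_fixedPoint' isClosed_closedBall.isComplete hmaps hx₀
    (edist_ne_top _ _)
  refine ⟨u, hu, ?_⟩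
  simpa [Φ, Function.IsFixedPt] using hfix

end Newton

theorem one_sub_sqrt_one_sub_root {β K c τ : ℝ} (hβ : 0 < β) (hK : 0 < K)
    (hτdef : τ = 2 * K / β ^ 2 * c) (hτ : τ < 1) :
    K * (β / K * (1 - √(1 - τ))) < β ∧
      K / 2 * (β / K * (1 - √(1 - τ))) ^ 2 + c = β * (β / K * (1 - √(1 - τ))) := by
  have hsqrt_pos : 0 < √(1 - τ) := Real.sqrt_pos.mpr (by linarith)
  have hsq : √(1 - τ) ^ 2 = 1 - τ := Real.sq_sqrt (by linarith)
  have hc : 2 * K * c = τ * β ^ 2 := by rw [hτdef]; field_simp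
  constructor
  · rw [← mul_assoc, mul_div_cancel₀ β hK.ne']
    nlinarith
  · field_simp
    linear_combination β ^ 2 * hsq + hc

theorem brezzi_rappaz_raviart_general
    {X : Type*} [NormedAddCommGroup X] [NormedSpace ℝ X]
    [FiniteDimensional ℝ X]
    (np : X → ℝ)
    (G : X → X →L[ℝ] ℝ) (hG : ContDiff ℝ 1 G)
    (uh : X) (β L ch R : ℝ)
    (hβ : 0 < β) (hL : 0 < L) (hch : 0 < ch)
    (hchdef : ch = ⨆ v : {v : X // v ≠ 0}, np (v : X) / ‖(v : X)‖)
    (hinfsup : ∀ w : X, β * ‖w‖ ≤ ‖fderiv ℝ G uh w‖)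
    (hLip : ∀ w : X, ‖uh - w‖ ≤ R → ‖fderiv ℝ G uh - fderiv ℝ G w‖ ≤ L * np (uh - w))
    (τ : ℝ) (hτdef : τ = (2 * L * ch / β ^ 2) * ‖G uh‖)
    (hτ : τ < 1) (hR : β / (L * ch) ≤ R) :
    ∃ u : X, (G u = 0 ∧ ‖u - uh‖ ≤ β / (L * ch)) ∧
      (∀ u' : X, G u' = 0 → ‖u' - uh‖ ≤ β / (L * ch) → u' = u) ∧
      ‖uh - u‖ ≤ (β / (L * ch)) * (1 - Real.sqrt (1 - τ)) := by
  have hK : 0 < L * ch := mul_pos hL hch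
  have hderiv : ∀ z ∈ closedBall uh (β / (L * ch)),
      ‖fderiv ℝ G z - fderiv ℝ G uh‖ ≤ L * ch * ‖z - uh‖ :=
    fun z hz => norm_sub_le_of_norm_sub_le_mul_of_eq_iSup (f := fderiv ℝ G) hch hchdef hL.le
      (hLip z ((norm_sub_rev uh z).trans_le ((mem_closedBall_iff_norm.mp hz).trans hR)))
  have hrem : ∀ v ∈ closedBall uh (β / (L * ch)), ∀ w ∈ closedBall uh (β / (L * ch)),
      ‖G v - G w - fderiv ℝ G uh (v - w)‖ ≤ L * ch / 2 * (‖v - uh‖ + ‖w - uh‖) * ‖v - w‖ :=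
    fun v hv w hw => norm_image_sub_sub_le_of_norm_fderiv_sub_le hK.le
      (fun z _ => (hG.differentiable one_ne_zero z).hasFDerivAt) hderiv hv hw
  have hinj : Function.Injective (fderiv ℝ G uh) := (injective_iff_map_eq_zero _).mpr
    fun x hx => norm_le_zero_iff.mp (nonpos_of_mul_nonpos_right (by simpa [hx] using hinfsup x) hβ)
  obtain ⟨e, he⟩ :=
    ContinuousLinearMap.exists_continuousLinearEquiv_toStrongDual_of_injective hinj
  obtain ⟨hKr, hroot⟩ := one_sub_sqrt_one_sub_root (c := ‖G uh‖) hβ hK (by rw [hτdef]; ring) hτ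
  set r := β / (L * ch) * (1 - √(1 - τ))
  have hrρ : r ≤ β / (L * ch) := by rw [le_div_iff₀ hK, mul_comm]; exact hKr.le
  obtain ⟨u, hu, hGu⟩ := exists_zero_of_norm_remainder_le (A := e) (by rw [he]; exact hinfsup) hβ
    hK.le (fun v hv w hw => by
      rw [he]; exact hrem v (closedBall_subset_closedBall hrρ hv) w
        (closedBall_subset_closedBall hrρ hw)) hKr hroot.le
  have hu' : ‖u - uh‖ ≤ r := mem_closedBall_iff_norm.mp hu
  refine ⟨u, ⟨hGu, hu'.trans hrρ⟩, fun u' hGu' hu'ρ => ?_, norm_sub_rev uh u ▸ hu'⟩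
  refine eq_of_image_eq_of_norm_remainder_le hinfsup hrem (mem_closedBall_iff_norm.mpr hu'ρ)
    (closedBall_subset_closedBall hrρ hu) ?_ (hGu'.trans hGu.symm)
  have hu'β : L * ch * ‖u' - uh‖ ≤ β := by rwa [← le_div_iff₀' hK]
  have huβ : L * ch * ‖u - uh‖ < β := (mul_le_mul_of_nonneg_left hu' hK.le).trans_lt hKr
  linarith

/-- Brezzi–Rappaz–Raviart a posteriori error bound: if the proximity indicator
`τ = (2 L c_h / β²) ‖G(û)‖_{X'} < 1`, then there is a unique zero `u` of `G` in the ball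
of radius `β/(L c_h)` around `û`, and `|û − u|₁ ≤ (β/(L c_h)) (1 − √(1 − τ))`. -/
theorem brezzi_rappaz_raviart
    {X : Type*} [NormedAddCommGroup X] [NormedSpace ℝ X]
    [FiniteDimensional ℝ X] [Nontrivial X]
    (np : X → ℝ)
    (G : X → X →L[ℝ] ℝ) (hG : ContDiff ℝ 1 G)
    (uh : X) (β L ch R : ℝ)
    (hβ : 0 < β) (hL : 0 < L) (hch : 0 < ch)
    (hchdef : ch = ⨆ v : {v : X // v ≠ 0}, np (v : X) / ‖(v : X)‖)
    (hinfsup : ∀ w : X, β * ‖w‖ ≤ ‖fderiv ℝ G uh w‖)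
    (hLip : ∀ w : X, ‖uh - w‖ ≤ R → ‖fderiv ℝ G uh - fderiv ℝ G w‖ ≤ L * np (uh - w))
    (τ : ℝ) (hτdef : τ = (2 * L * ch / β ^ 2) * ‖G uh‖)
    (hτ : τ < 1) (hR : β / (L * ch) ≤ R) :
    ∃ u : X, (G u = 0 ∧ ‖u - uh‖ ≤ β / (L * ch)) ∧
      (∀ u' : X, G u' = 0 → ‖u' - uh‖ ≤ β / (L * ch) → u' = u) ∧
      ‖uh - u‖ ≤ (β / (L * ch)) * (1 - Real.sqrt (1 - τ)) :=
  brezzi_rappaz_raviart_general np G hG uh β L ch R hβ hL hch hchdef hinfsup hLip τ hτdef hτ hR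
end
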